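/- If U1, U2 ⊆ ℤ^d are non-empty, boundary disjoint sets with U1 ⊆ U2, then for every non-empty set V ⊆ ℤ^d with V ∩ U2 = ∅ one has dist(U1, V) > dist(U2, V). -/

import Mathlib

namespace P3C

def latticeGraph (d : ℕ) : SimpleGraph (Fin d → ℤ) where
  Adj v w := ∃ i, (w i = v i + 1 ∨ w i = v i - 1) ∧ ∀ j, j ≠ i → w j = v j
  symm := ⟨by
    rintro v w ⟨i, h1, h2⟩
    exact ⟨i, by omega, fun j hj => (h2 j hj).symm⟩⟩
  loopless := ⟨by
    rintro v ⟨i, h1, _⟩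
    omega⟩

def vplus (d : ℕ) (U : Set (Fin d → ℤ)) : Set (Fin d → ℤ) :=
  {u | u ∈ U ∨ ∃ w ∈ U, (latticeGraph d).Adj u w}

def vminus (d : ℕ) (U : Set (Fin d → ℤ)) : Set (Fin d → ℤ) :=
  {u | u ∈ U ∧ ∀ w, (latticeGraph d).Adj u w → w ∈ U}

def inBdry (d : ℕ) (U : Set (Fin d → ℤ)) : Set (Fin d → ℤ) := U \ vminus d U

def outBdry (d : ℕ) (U : Set (Fin d → ℤ)) : Set (Fin d → ℤ) := vplus d U \ U

def ConnectedIn {V : Type*} (G : SimpleGraph V) (S : Set V) : Prop := (G.induce S).Connected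

def BiConnected (d : ℕ) (U : Set (Fin d → ℤ)) : Prop :=
  U ≠ ∅ ∧ U ≠ Set.univ ∧ ConnectedIn (latticeGraph d) U ∧ ConnectedIn (latticeGraph d) Uᶜ

def edgeBdry (d : ℕ) (U : Set (Fin d → ℤ)) : Set ((Fin d → ℤ) × (Fin d → ℤ)) :=
  {p | (latticeGraph d).Adj p.1 p.2 ∧ ((p.1 ∈ U ∧ p.2 ∉ U) ∨ (p.2 ∈ U ∧ p.1 ∉ U))}

def IsFourCycle (d : ℕ) (v00 v01 v11 v10 : Fin d → ℤ) : Prop :=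
  (latticeGraph d).Adj v00 v01 ∧ (latticeGraph d).Adj v01 v11 ∧
  (latticeGraph d).Adj v11 v10 ∧ (latticeGraph d).Adj v10 v00 ∧ v00 ≠ v11 ∧ v01 ≠ v10

def BoundaryDisjoint (d : ℕ) (U1 U2 : Set (Fin d → ℤ)) : Prop :=
  edgeBdry d U1 ∩ edgeBdry d U2 = ∅ ∧
  ¬ ∃ v00 v01 v11 v10, IsFourCycle d v00 v01 v11 v10 ∧
    v00 ∈ U1ᶜ ∩ U2ᶜ ∧ v01 ∈ U1ᶜ ∩ U2 ∧ v11 ∈ U1 ∩ U2 ∧ v10 ∈ U1 ∩ U2ᶜ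

def translates (n d : ℕ) (U : Set (Fin d → ℤ)) : Set (Set (Fin d → ℤ)) :=
  {W | ∃ x : Fin d → ℤ, (∀ i, (n : ℤ) ∣ x i) ∧ W = (fun u => u + x) '' U}

def TranslationRespecting (n d : ℕ) (U : Set (Fin d → ℤ)) : Prop :=
  BiConnected d U ∧
  ∀ U1 ∈ translates n d U, ∀ U2 ∈ translates n d U, U1 ≠ U2 → BoundaryDisjoint d U1 U2

def TypeZero (n d : ℕ) (U : Set (Fin d → ℤ)) : Prop :=
  TranslationRespecting n d U ∧ (translates n d U).Nontrivial ∧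
  ∀ A ∈ translates n d U, ∀ B ∈ translates n d U, A ⊆ B ∨ B ⊆ A

noncomputable def setDist (d : ℕ) (A B : Set (Fin d → ℤ)) : ℕ :=
  sInf {k | ∃ a ∈ A, ∃ b ∈ B, (latticeGraph d).dist a b = k}

def IsLatticeHHF (d : ℕ) (h : (Fin d → ℤ) → ℤ) : Prop :=
  ∀ v w, (latticeGraph d).Adj v w → |h v - h w| = 1

def homZeroLattice (d : ℕ) : Set ((Fin d → ℤ) → ℤ) :=
  {h | IsLatticeHHF d h ∧ h 0 = 0}

def IsQP (n d : ℕ) (m : Fin d → ℤ) (h : (Fin d → ℤ) → ℤ) : Prop :=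
  h ∈ homZeroLattice d ∧ ∀ (v : Fin d → ℤ) (i : Fin d), h (v + Pi.single i (n : ℤ)) = h v + m i

def QPset (n d : ℕ) : Set ((Fin d → ℤ) → ℤ) :=
  {h | ∃ m : Fin d → ℤ, (∀ i, (6 : ℤ) ∣ m i ∧ |m i| ≤ (n : ℤ)) ∧ IsQP n d m h}

def compIn {V : Type*} (G : SimpleGraph V) (S : Set V) (u : V) : Set V :=
  {w | ∃ (hu : u ∈ S) (hw : w ∈ S), (G.induce S).Reachable ⟨u, hu⟩ ⟨w, hw⟩}

def subLL (d : ℕ) (h : (Fin d → ℤ) → ℤ) (k : ℤ) (u : Fin d → ℤ) : Set (Fin d → ℤ) :=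
  compIn (latticeGraph d) {w | h w ≠ k + 1} u

def subLC (d : ℕ) (h : (Fin d → ℤ) → ℤ) (k : ℤ) (u v : Fin d → ℤ) : Set (Fin d → ℤ) :=
  (compIn (latticeGraph d) (subLL d h k u)ᶜ v)ᶜ

def IsSublevelComponent (d : ℕ) (h : (Fin d → ℤ) → ℤ) (A : Set (Fin d → ℤ)) : Prop :=
  ∃ u v k, h u ≤ k ∧ k < h v ∧ A = subLC d h k u v

def sepComps (d : ℕ) (h : (Fin d → ℤ) → ℤ) (u v : Fin d → ℤ) : Set (Set (Fin d → ℤ)) :=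
  {A | IsSublevelComponent d h A ∧ u ∈ A ∧ v ∉ A}

def cycleEdge (d : ℕ) (v00 v01 v11 v10 : Fin d → ℤ) (e : (Fin d → ℤ) × (Fin d → ℤ)) : Prop :=
  ({e.1, e.2} : Set (Fin d → ℤ)) = {v00, v01} ∨ ({e.1, e.2} : Set (Fin d → ℤ)) = {v01, v11} ∨
  ({e.1, e.2} : Set (Fin d → ℤ)) = {v11, v10} ∨ ({e.1, e.2} : Set (Fin d → ℤ)) = {v10, v00}

def bdryGraph (d : ℕ) (U : Set (Fin d → ℤ)) : SimpleGraph (Fin d → ℤ) where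
  Adj u v := u ≠ v ∧ ∃ eu ev, eu ∈ edgeBdry d U ∧ ev ∈ edgeBdry d U ∧
    (u = eu.1 ∨ u = eu.2) ∧ (v = ev.1 ∨ v = ev.2) ∧
    ∃ a b c e, IsFourCycle d a b c e ∧ cycleEdge d a b c e eu ∧ cycleEdge d a b c e ev
  symm := ⟨by
    rintro u v ⟨hne, eu, ev, h1, h2, h3, h4, a, b, c, e, hc, hcu, hcv⟩
    exact ⟨hne.symm, ev, eu, h2, h1, h4, h3, a, b, c, e, hc, hcv, hcu⟩⟩
  loopless := ⟨fun u h => h.1 rfl⟩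

/-! Torus definitions -/

def torusAdj (n d : ℕ) (v w : Fin d → ZMod n) : Prop :=
  ∃ i, (w i = v i + 1 ∨ w i = v i - 1) ∧ ∀ j, j ≠ i → w j = v j

def IsProperColoring (n d : ℕ) (f : (Fin d → ZMod n) → Fin 3) : Prop :=
  ∀ v w, torusAdj n d v w → f v ≠ f w

def torusColorings (n d : ℕ) : Set ((Fin d → ZMod n) → Fin 3) :=
  {f | IsProperColoring n d f}

def colZero (n d : ℕ) : Set ((Fin d → ZMod n) → Fin 3) :=
  {f | IsProperColoring n d f ∧ f 0 = 0}

def IsTorusHHF (n d : ℕ) (h : (Fin d → ZMod n) → ℤ) : Prop :=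
  ∀ v w, torusAdj n d v w → |h v - h w| = 1

def torusHomZero (n d : ℕ) : Set ((Fin d → ZMod n) → ℤ) :=
  {h | IsTorusHHF n d h ∧ h 0 = 0}

noncomputable def cp (n d : ℕ) (par : ℕ) (k : Fin 3) (f : (Fin d → ZMod n) → Fin 3) : ℝ :=
  (Nat.card {v : Fin d → ZMod n | (∑ j, (v j).val) % 2 = par ∧ f v = k} : ℝ) /
  (Nat.card {v : Fin d → ZMod n | (∑ j, (v j).val) % 2 = par} : ℝ)

def latticeProj (n d : ℕ) (v : Fin d → ℤ) : Fin d → ZMod n := fun i => (v i : ZMod n)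

def toCol (n d : ℕ) (h : (Fin d → ℤ) → ℤ) (x : Fin d → ZMod n) : Fin 3 :=
  ⟨(h (fun i => ((x i).val : ℤ)) % 3).toNat, by
    have h1 : (0 : ℤ) ≤ h (fun i => ((x i).val : ℤ)) % 3 := Int.emod_nonneg _ (by norm_num)
    have h2 : h (fun i => ((x i).val : ℤ)) % 3 < 3 := Int.emod_lt_of_pos _ (by norm_num)
    omega⟩

end P3C

/-! The pair `a ∈ U₁`, `b ∈ V` realising `dist(U₁, V)` is joined by a geodesic. Its first step
leaves `a` along an edge; that edge cannot lie in `∂U₁`, which is disjoint from `∂U₂`, unless its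
other end is already in `U₂`. Hence that other end is a point of `U₂` strictly closer to `b`. -/

namespace SimpleGraph

variable {V : Type*} {G : SimpleGraph V} {u v : V}

theorem Reachable.exists_adj_dist_lt (h : G.Reachable u v) (hne : u ≠ v) :
    ∃ w, G.Adj u w ∧ G.dist w v < G.dist u v := by
  obtain ⟨p, hp⟩ := h.exists_walk_length_eq_dist
  cases p with
  | nil => exact absurd rfl hne
  | @cons _ w _ hadj q =>
    refine ⟨w, hadj, ?_⟩
    rw [← hp, Walk.length_cons]
    exact Nat.lt_succ_of_le (dist_le q)

end SimpleGraph

namespace P3C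

variable {d : ℕ}

theorem latticeGraph_adj_add_single (v : Fin d → ℤ) (i : Fin d) :
    (latticeGraph d).Adj v (v + Pi.single i 1) :=
  ⟨i, Or.inl (by simp), fun j hj => by simp [Pi.single_eq_of_ne hj]⟩

theorem latticeGraph_reachable_add_single (v : Fin d → ℤ) (i : Fin d) (k : ℤ) :
    (latticeGraph d).Reachable v (v + Pi.single i k) := by
  induction k using Int.induction_on with
  | zero => simp
  | succ k ih =>
    rw [Pi.single_add, ← add_assoc]
    exact ih.trans (latticeGraph_adj_add_single _ i).reachable
  | pred k ih =>
    have hstep :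
        v + Pi.single i (-(k : ℤ)) = v + Pi.single i (-(k : ℤ) - 1) + Pi.single i 1 := by
      rw [add_assoc, ← Pi.single_add, sub_add_cancel]
    rw [hstep] at ih
    exact ih.trans (latticeGraph_adj_add_single _ i).symm.reachable

theorem latticeGraph_connected : (latticeGraph d).Connected := by
  refine ⟨fun v w => ?_⟩
  suffices ∀ s : Finset (Fin d),
      (latticeGraph d).Reachable v (v + ∑ i ∈ s, Pi.single i ((w - v) i)) by
    simpa only [Finset.univ_sum_single, add_sub_cancel] using this Finset.univ
  intro s
  induction s using Finset.induction_on with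
  | empty => simp
  | insert i s hi ih =>
    rw [Finset.sum_insert hi, add_left_comm, add_comm]
    exact ih.trans (latticeGraph_reachable_add_single _ i _)

theorem BoundaryDisjoint.mem_of_adj {U₁ U₂ : Set (Fin d → ℤ)} (hbd : BoundaryDisjoint d U₁ U₂)
    (hsub : U₁ ⊆ U₂) {a c : Fin d → ℤ} (ha : a ∈ U₁) (hac : (latticeGraph d).Adj a c) : c ∈ U₂ := by
  by_contra hc
  have : (a, c) ∈ edgeBdry d U₁ ∩ edgeBdry d U₂ :=
    ⟨⟨hac, Or.inl ⟨ha, fun hc₁ => hc (hsub hc₁)⟩⟩, ⟨hac, Or.inl ⟨hsub ha, hc⟩⟩⟩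
  simp [hbd.1] at this

theorem setDist_le {A B : Set (Fin d → ℤ)} {a b : Fin d → ℤ} (ha : a ∈ A) (hb : b ∈ B) :
    setDist d A B ≤ (latticeGraph d).dist a b :=
  Nat.sInf_le ⟨a, ha, b, hb, rfl⟩

theorem exists_dist_eq_setDist {A B : Set (Fin d → ℤ)} (hA : A.Nonempty) (hB : B.Nonempty) :
    ∃ a ∈ A, ∃ b ∈ B, (latticeGraph d).dist a b = setDist d A B := by
  obtain ⟨a, ha⟩ := hA
  obtain ⟨b, hb⟩ := hB
  exact Nat.sInf_mem (s := {k | ∃ a ∈ A, ∃ b ∈ B, (latticeGraph d).dist a b = k})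
    ⟨_, a, ha, b, hb, rfl⟩

end P3C

theorem stmt9_general (d : ℕ) (U1 U2 V : Set (Fin d → ℤ))
    (h1 : U1.Nonempty)
    (hbd : P3C.BoundaryDisjoint d U1 U2) (hsub : U1 ⊆ U2)
    (hV : V.Nonempty) (hdisj : V ∩ U2 = ∅) :
    P3C.setDist d U2 V < P3C.setDist d U1 V := by
  obtain ⟨a, ha, b, hb, hab⟩ := P3C.exists_dist_eq_setDist h1 hV
  have hne : a ≠ b := by
    rintro rfl
    exact (Set.eq_empty_iff_forall_notMem.mp hdisj) a ⟨hb, hsub ha⟩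
  obtain ⟨c, hac, hcb⟩ := (P3C.latticeGraph_connected.preconnected a b).exists_adj_dist_lt hne
  calc P3C.setDist d U2 V ≤ (P3C.latticeGraph d).dist c b :=
        P3C.setDist_le (hbd.mem_of_adj hsub ha hac) hb
    _ < P3C.setDist d U1 V := hab ▸ hcb

theorem stmt9 (d : ℕ) (U1 U2 V : Set (Fin d → ℤ))
    (h1 : U1.Nonempty) (h2 : U2.Nonempty)
    (hbd : P3C.BoundaryDisjoint d U1 U2) (hsub : U1 ⊆ U2)
    (hV : V.Nonempty) (hdisj : V ∩ U2 = ∅) :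
    P3C.setDist d U2 V < P3C.setDist d U1 V :=
  stmt9_general d U1 U2 V h1 hbd hsub hV hdisj
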